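/- Let d ≥ 1, s ≤ 0, σ ∈ ℝ, and let φ be a Schwartz function on ℝ^d. For 0 < μ < 1 let D_μφ(x) := φ(μx). Then: if σ ≤ 0, ‖D_μφ‖_{E^{s/μ}_σ} ≤ μ^{−d/2+σ} ‖φ‖_{E^s_σ}; and if σ > 0, ‖D_μφ‖_{E^{s/μ}_σ} ≤ μ^{−d/2} ‖φ‖_{E^s_σ}. -/

import Mathlib

/-!
By the scaling rule for the Fourier transform, `𝓕(D_μφ)(ξ) = μ^{-d} 𝓕φ(ξ/μ)`. Substituting
`ξ = μη` turns the weight `2^{2(s/μ)|ξ|₁}` exactly into `2^{2s|η|₁}`, and the Jacobian together with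
the Fourier factor contributes `μ^{-d}`. What remains is to compare `⟨μη⟩^{2σ}` with `⟨η⟩^{2σ}`:
for `μ < 1` it is at most `μ^{2σ}⟨η⟩^{2σ}` when `σ ≤ 0` and at most `⟨η⟩^{2σ}` when `σ ≥ 0`.
-/

open MeasureTheory Real FourierTransform

/-- The `E^s_σ` norm on `ℝ^d`:
`‖φ‖_{E^s_σ} = (∫ ⟨ξ⟩^{2σ} 2^{2s|ξ|₁} |𝓕φ(ξ)|² dξ)^{1/2}`, where `|ξ|₁ = ∑ |ξᵢ|`
and `⟨ξ⟩^{2σ} = (1+‖ξ‖²)^σ`. -/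
noncomputable def Enorm (d : ℕ) (s σ : ℝ) (f : EuclideanSpace ℝ (Fin d) → ℂ) : ℝ :=
  (∫ ξ : EuclideanSpace ℝ (Fin d),
    (1 + ‖ξ‖ ^ 2) ^ σ * (2 : ℝ) ^ (2 * s * ∑ i, |ξ i|) * ‖𝓕 f ξ‖ ^ 2) ^ (1 / 2 : ℝ)

open scoped RealInnerProductSpace

section
variable {V E F : Type*} [NormedAddCommGroup V] [InnerProductSpace ℝ V] [FiniteDimensional ℝ V]
  [MeasurableSpace V] [BorelSpace V] [NormedAddCommGroup E] [NormedSpace ℂ E]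
  [NormedAddCommGroup F] [NormedSpace ℝ F]

theorem Real.fourier_comp_smul (f : V → E) {a : ℝ} (ha : a ≠ 0) (ξ : V) :
    𝓕 (fun x ↦ f (a • x)) ξ = |(a ^ Module.finrank ℝ V)⁻¹| • 𝓕 f (a⁻¹ • ξ) := by
  simp only [Real.fourier_eq]
  have h : ∀ x : V, 𝐞 (-⟪x, ξ⟫) • f (a • x) = 𝐞 (-⟪a • x, a⁻¹ • ξ⟫) • f (a • x) := by
    intro x
    rw [real_inner_smul_left, real_inner_smul_right, mul_inv_cancel_left₀ ha]
  simp_rw [h]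
  exact Measure.integral_comp_smul volume (fun v ↦ 𝐞 (-⟪v, a⁻¹ • ξ⟫) • f v) a

theorem SchwartzMap.integrable_one_add_norm_sq_rpow_mul_mul_norm_sq (ψ : SchwartzMap V F)
    (σ : ℝ) {w : V → ℝ} {C : ℝ} (hw : AEStronglyMeasurable w) (hwC : ∀ x, ‖w x‖ ≤ C) :
    Integrable (fun x ↦ (1 + ‖x‖ ^ 2) ^ σ * w x * ‖ψ x‖ ^ 2) := by
  have hg := Function.hasTemperateGrowth_one_add_norm_sq_rpow V σ
  set ψσ := SchwartzMap.smulLeftCLM F (fun x : V ↦ (1 + ‖x‖ ^ 2) ^ σ) ψ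
  have hψσ : ∀ x, ‖ψσ x‖ = (1 + ‖x‖ ^ 2) ^ σ * ‖ψ x‖ := fun x ↦ by
    rw [SchwartzMap.smulLeftCLM_apply_apply hg, norm_smul, Real.norm_of_nonneg (by positivity)]
  have hbdd : ∀ x, ‖w x * ‖ψ x‖‖ ≤ C * SchwartzMap.seminorm ℝ 0 0 ψ := fun x ↦ by
    rw [norm_mul, norm_norm]
    exact mul_le_mul (hwC x) (ψ.norm_le_seminorm ℝ x) (norm_nonneg _)
      ((norm_nonneg _).trans (hwC x))
  refine (ψσ.integrable.norm.bdd_mul (hw.mul ψ.continuous.norm.aestronglyMeasurable)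
    (Filter.Eventually.of_forall hbdd)).congr (Filter.Eventually.of_forall fun x ↦ ?_)
  simp only [hψσ, Pi.mul_apply]
  ring

theorem integral_le_of_comp_smul_le {A G : V → ℝ} {a K : ℝ} (ha : 0 < a) (hA : ∀ x, 0 ≤ A x)
    (hG : Integrable G) (h : ∀ x, A (a • x) ≤ K * G x) :
    ∫ x, A x ≤ a ^ Module.finrank ℝ V * K * ∫ x, G x := by
  have hcov : ∫ x, A x = a ^ Module.finrank ℝ V * ∫ x, A (a • x) := by
    rw [Measure.integral_comp_smul_of_nonneg volume A a (hR := ha.le), smul_eq_mul,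
      mul_inv_cancel_left₀ (by positivity)]
  rw [hcov, mul_assoc, ← integral_const_mul K]
  refine mul_le_mul_of_nonneg_left ?_ (by positivity)
  exact integral_mono_of_nonneg (Filter.Eventually.of_forall fun x ↦ hA (a • x))
    (hG.const_mul K) (.of_forall h)

end

theorem one_add_mul_rpow_le_of_nonpos {a t σ : ℝ} (ha0 : 0 < a) (ha1 : a ≤ 1) (ht : 0 ≤ t)
    (hσ : σ ≤ 0) : (1 + a * t) ^ σ ≤ a ^ σ * (1 + t) ^ σ := by
  rw [← Real.mul_rpow ha0.le (by positivity)]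
  exact Real.rpow_le_rpow_of_nonpos (by positivity) (by nlinarith) hσ

theorem one_add_mul_rpow_le_of_nonneg {a t σ : ℝ} (ha0 : 0 ≤ a) (ha1 : a ≤ 1) (ht : 0 ≤ t)
    (hσ : 0 ≤ σ) : (1 + a * t) ^ σ ≤ (1 + t) ^ σ :=
  Real.rpow_le_rpow (by positivity) (by nlinarith) hσ

theorem Enorm_comp_smul_le {d : ℕ} {s σ c μ : ℝ} (hs : s ≤ 0) (hc : 0 ≤ c) (hμ : 0 < μ)
    (hweight : ∀ t, 0 ≤ t → (1 + μ ^ 2 * t) ^ σ ≤ c * (1 + t) ^ σ)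
    (φ : SchwartzMap (EuclideanSpace ℝ (Fin d)) ℂ) :
    Enorm d (s / μ) σ (fun x ↦ φ (μ • x)) ≤
      (c * μ ^ (-(d : ℝ))) ^ (1 / 2 : ℝ) * Enorm d s σ φ := by
  set w : EuclideanSpace ℝ (Fin d) → ℝ := fun ξ ↦ (2 : ℝ) ^ (2 * s * ∑ i, |ξ i|)
  have hw0 : ∀ ξ, 0 ≤ w ξ := fun ξ ↦ by positivity
  have hw1 : ∀ ξ, ‖w ξ‖ ≤ 1 := fun ξ ↦ by
    rw [Real.norm_of_nonneg (hw0 ξ)]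
    exact Real.rpow_le_one_of_one_le_of_nonpos one_le_two
      (mul_nonpos_of_nonpos_of_nonneg (by linarith) (by positivity))
  have hw : Continuous w := by fun_prop (disch := norm_num)
  -- `s ≤ 0` keeps `w` bounded; without integrability the right-hand integral would be junk `0`.
  have hG := (𝓕 φ).integrable_one_add_norm_sq_rpow_mul_mul_norm_sq σ
    hw.aestronglyMeasurable hw1
  set A : EuclideanSpace ℝ (Fin d) → ℝ := fun ξ ↦
    (1 + ‖ξ‖ ^ 2) ^ σ * (2 : ℝ) ^ (2 * (s / μ) * ∑ i, |ξ i|) * ‖𝓕 (fun x ↦ φ (μ • x)) ξ‖ ^ 2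
  have hA : ∀ η, A (μ • η) ≤ c * ((μ ^ d)⁻¹) ^ 2 * ((1 + ‖η‖ ^ 2) ^ σ * w η * ‖𝓕 φ η‖ ^ 2) :=
      fun η ↦ by
    have hnorm : ‖μ • η‖ ^ 2 = μ ^ 2 * ‖η‖ ^ 2 := by
      rw [norm_smul, Real.norm_of_nonneg hμ.le, mul_pow]
    have hexp : 2 * (s / μ) * ∑ i, |(μ • η) i| = 2 * s * ∑ i, |η i| := by
      simp only [PiLp.smul_apply, smul_eq_mul, abs_mul, abs_of_pos hμ, ← Finset.mul_sum]
      field_simp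
    have hF : 𝓕 (fun x ↦ φ (μ • x)) (μ • η) = (μ ^ d)⁻¹ • 𝓕 φ η := by
      rw [Real.fourier_comp_smul _ hμ.ne', inv_smul_smul₀ hμ.ne', finrank_euclideanSpace_fin,
        abs_of_pos (by positivity), SchwartzMap.fourier_coe]
    calc A (μ • η) = ((μ ^ d)⁻¹) ^ 2 * ((1 + μ ^ 2 * ‖η‖ ^ 2) ^ σ * w η * ‖𝓕 φ η‖ ^ 2) := by
          simp only [A, w]
          rw [hnorm, hexp, hF, norm_smul, Real.norm_of_nonneg (by positivity)]
          ring
      _ ≤ ((μ ^ d)⁻¹) ^ 2 * (c * (1 + ‖η‖ ^ 2) ^ σ * w η * ‖𝓕 φ η‖ ^ 2) := by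
          gcongr
          exact hweight _ (by positivity)
      _ = c * ((μ ^ d)⁻¹) ^ 2 * ((1 + ‖η‖ ^ 2) ^ σ * w η * ‖𝓕 φ η‖ ^ 2) := by ring
  have key := integral_le_of_comp_smul_le hμ (fun ξ ↦ by positivity) hG hA
  rw [finrank_euclideanSpace_fin] at key
  have hK : μ ^ d * (c * ((μ ^ d)⁻¹) ^ 2) = c * μ ^ (-(d : ℝ)) := by
    rw [Real.rpow_neg hμ.le, Real.rpow_natCast]
    field_simp
  rw [hK] at key
  unfold Enorm
  rw [← Real.mul_rpow (by positivity) (integral_nonneg fun η ↦ by positivity)]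
  exact Real.rpow_le_rpow (integral_nonneg fun ξ ↦ by positivity) key (by norm_num)

theorem stmt_2_general (d : ℕ) (s σ : ℝ) (hs : s ≤ 0)
    (φ : SchwartzMap (EuclideanSpace ℝ (Fin d)) ℂ)
    (μ : ℝ) (hμ0 : 0 < μ) (hμ1 : μ < 1) :
    (σ ≤ 0 → Enorm d (s / μ) σ (fun x => φ (μ • x)) ≤
      μ ^ (-(d : ℝ) / 2 + σ) * Enorm d s σ ⇑φ) ∧
    (0 < σ → Enorm d (s / μ) σ (fun x => φ (μ • x)) ≤
      μ ^ (-(d : ℝ) / 2) * Enorm d s σ ⇑φ) := by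
  have hμ2 : μ ^ 2 ≤ 1 := pow_le_one₀ hμ0.le hμ1.le
  refine ⟨fun hσ ↦ ?_, fun hσ ↦ ?_⟩
  · convert Enorm_comp_smul_le hs (by positivity) hμ0
      (fun t ht ↦ one_add_mul_rpow_le_of_nonpos (by positivity) hμ2 ht hσ) φ using 2
    rw [← Real.rpow_natCast μ 2, ← Real.rpow_mul hμ0.le, ← Real.rpow_add hμ0,
      ← Real.rpow_mul hμ0.le]
    ring_nf
  · convert Enorm_comp_smul_le hs zero_le_one hμ0
      (fun t ht ↦ (one_mul ((1 + t) ^ σ)).symm ▸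
        one_add_mul_rpow_le_of_nonneg (by positivity) hμ2 ht hσ.le) φ using 2
    rw [one_mul, ← Real.rpow_mul hμ0.le]
    ring_nf

/-- Scaling estimate for `D_μφ(x) = φ(μx)`, `0 < μ < 1`, for Schwartz `φ`:
if `σ ≤ 0` then `‖D_μφ‖_{E^{s/μ}_σ} ≤ μ^{-d/2+σ} ‖φ‖_{E^s_σ}`, and if `σ > 0` then
`‖D_μφ‖_{E^{s/μ}_σ} ≤ μ^{-d/2} ‖φ‖_{E^s_σ}`. -/
theorem stmt_2 (d : ℕ) (hd : 1 ≤ d) (s σ : ℝ) (hs : s ≤ 0)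
    (φ : SchwartzMap (EuclideanSpace ℝ (Fin d)) ℂ)
    (μ : ℝ) (hμ0 : 0 < μ) (hμ1 : μ < 1) :
    (σ ≤ 0 → Enorm d (s / μ) σ (fun x => φ (μ • x)) ≤
      μ ^ (-(d : ℝ) / 2 + σ) * Enorm d s σ ⇑φ) ∧
    (0 < σ → Enorm d (s / μ) σ (fun x => φ (μ • x)) ≤
      μ ^ (-(d : ℝ) / 2) * Enorm d s σ ⇑φ) :=
  stmt_2_general d s σ hs φ μ hμ0 hμ1
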